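/- Let Ω ⊆ ℝ be a measurable set, N₀ > 0, P̄ ≥ 0, Q̄ ≥ 0, and let H_SD, H_SR, H_RD : Ω → ℂ and α̂ : Ω → ℂ be measurable. For measurable P : Ω → [0,∞) and Ξ : Ω → ℂ define the rate functional A(P, Ξ) = ∫_Ω (1/2)·log₂(1 + |H_SD(f) + H_RD(f)H_SR(f)Ξ(f)|²·P(f)/((|H_RD(f)Ξ(f)|² + 1)·N₀)) df and the feasibility conditions ∫_Ω P(f) df ≤ P̄ and ∫_Ω |Ξ(f)|²·(|H_SR(f)|²·P(f) + N₀) df ≤ Q̄. Then the supremum of A(P, Θ/(1 − α̂·Θ)) over all measurable P : Ω → [0,∞) and Θ : Ω → ℂ with α̂(f)·Θ(f) ≠ 1 for all f ∈ Ω, subject to feasibility of (P, Θ/(1 − α̂Θ)), equals the supremum of A(P, Ξ) over all measurable P : Ω → [0,∞) and Ξ : Ω → ℂ with α̂(f)·Ξ(f) ≠ −1 for all f ∈ Ω, subject to feasibility of (P, Ξ). -/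

import Mathlib

/-!
Pointwise, `Θ ↦ Θ / (1 - α̂Θ)` maps `{α̂Θ ≠ 1}` onto `{α̂Ξ ≠ -1}`, with inverse
`Ξ ↦ Ξ / (1 + α̂Ξ)`; both maps preserve measurability. Since the rate and the constraints
see the relay filter only through `Ξ` on `Ω`, the two sets of achievable rates coincide.
-/

open MeasureTheory

/-- The rate functional `A(P, Ξ)` of problem (13): the integral over the band `Ω`
of the per-frequency achievable rate. -/
noncomputable def rateFunctional (Ω : Set ℝ) (N₀ : ℝ) (HSD HSR HRD : ℝ → ℂ)
    (P : ℝ → ℝ) (Ξ : ℝ → ℂ) : ℝ :=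
  ∫ f in Ω, (1 / 2) * Real.logb 2 (1 +
    ‖HSD f + HRD f * HSR f * Ξ f‖ ^ 2 * P f /
      ((‖HRD f * Ξ f‖ ^ 2 + 1) * N₀))

/-- The feasibility conditions of problem (13): the source power constraint
`∫_Ω P ≤ P̄` and the relay power constraint `∫_Ω |Ξ|²(|H_SR|²P + N₀) ≤ Q̄`. -/
def feasible (Ω : Set ℝ) (N₀ Pbar Qbar : ℝ) (HSR : ℝ → ℂ)
    (P : ℝ → ℝ) (Ξ : ℝ → ℂ) : Prop :=
  (∫ f in Ω, P f) ≤ Pbar ∧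
  (∫ f in Ω, ‖Ξ f‖ ^ 2 * (‖HSR f‖ ^ 2 * P f + N₀)) ≤ Qbar

section EffectiveGain

variable {K : Type*} [Field K] {a θ ξ : K}

theorem mul_div_one_sub_mul_ne_neg_one (h : a * θ ≠ 1) : a * (θ / (1 - a * θ)) ≠ -1 := by
  have hden : 1 - a * θ ≠ 0 := sub_ne_zero.mpr h.symm
  rw [mul_div_assoc', Ne, div_eq_iff hden]
  intro e
  exact one_ne_zero (by linear_combination e : (1 : K) = 0)

theorem mul_div_one_add_mul_ne_one (h : a * ξ ≠ -1) : a * (ξ / (1 + a * ξ)) ≠ 1 := by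
  have hden : 1 + a * ξ ≠ 0 := fun e => h (by linear_combination e)
  rw [mul_div_assoc', Ne, div_eq_iff hden]
  intro e
  exact one_ne_zero (by linear_combination -e : (1 : K) = 0)

theorem div_one_sub_mul_div_one_add_mul (h : a * ξ ≠ -1) :
    ξ / (1 + a * ξ) / (1 - a * (ξ / (1 + a * ξ))) = ξ := by
  have hden : 1 + a * ξ ≠ 0 := fun e => h (by linear_combination e)
  rw [mul_div_assoc', one_sub_div hden, add_sub_cancel_right,
    div_div_div_cancel_right₀ hden, div_one]

end EffectiveGain

section Congr

variable {Ω : Set ℝ} {Ξ Ξ' : ℝ → ℂ}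

theorem rateFunctional_congr (hΩ : MeasurableSet Ω) (N₀ : ℝ) (HSD HSR HRD : ℝ → ℂ)
    (P : ℝ → ℝ) (h : Set.EqOn Ξ Ξ' Ω) :
    rateFunctional Ω N₀ HSD HSR HRD P Ξ = rateFunctional Ω N₀ HSD HSR HRD P Ξ' :=
  setIntegral_congr_fun hΩ fun f hf => by simp only [h hf]

theorem feasible_congr (hΩ : MeasurableSet Ω) (N₀ Pbar Qbar : ℝ) (HSR : ℝ → ℂ)
    (P : ℝ → ℝ) (h : Set.EqOn Ξ Ξ' Ω) :
    feasible Ω N₀ Pbar Qbar HSR P Ξ ↔ feasible Ω N₀ Pbar Qbar HSR P Ξ' := by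
  have hrelay : ∫ f in Ω, ‖Ξ f‖ ^ 2 * (‖HSR f‖ ^ 2 * P f + N₀) =
      ∫ f in Ω, ‖Ξ' f‖ ^ 2 * (‖HSR f‖ ^ 2 * P f + N₀) :=
    setIntegral_congr_fun hΩ fun f hf => by simp only [h hf]
  rw [feasible, feasible, hrelay]

end Congr

theorem fd_ff_rate_reformulation_general
    (Ω : Set ℝ) (hΩ : MeasurableSet Ω) (N₀ Pbar Qbar : ℝ)
    (HSD HSR HRD αh : ℝ → ℂ)
    (hαm : Measurable αh) :
    sSup {r : ℝ | ∃ P : ℝ → ℝ, ∃ Θ : ℝ → ℂ,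
        Measurable P ∧ (∀ f, 0 ≤ P f) ∧ Measurable Θ ∧
        (∀ f ∈ Ω, αh f * Θ f ≠ 1) ∧
        feasible Ω N₀ Pbar Qbar HSR P (fun f => Θ f / (1 - αh f * Θ f)) ∧
        r = rateFunctional Ω N₀ HSD HSR HRD P (fun f => Θ f / (1 - αh f * Θ f))}
      = sSup {r : ℝ | ∃ P : ℝ → ℝ, ∃ Ξ : ℝ → ℂ,
        Measurable P ∧ (∀ f, 0 ≤ P f) ∧ Measurable Ξ ∧
        (∀ f ∈ Ω, αh f * Ξ f ≠ -1) ∧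
        feasible Ω N₀ Pbar Qbar HSR P Ξ ∧
        r = rateFunctional Ω N₀ HSD HSR HRD P Ξ} := by
  congr 1
  ext r
  constructor
  · rintro ⟨P, Θ, hPm, hP, hΘm, hΘ, hfeas, rfl⟩
    exact ⟨P, _, hPm, hP, hΘm.div (measurable_const.sub (hαm.mul hΘm)),
      fun f hf => mul_div_one_sub_mul_ne_neg_one (hΘ f hf), hfeas, rfl⟩
  · rintro ⟨P, Ξ, hPm, hP, hΞm, hΞ, hfeas, rfl⟩
    have hinv : Set.EqOn
        (fun f => Ξ f / (1 + αh f * Ξ f) / (1 - αh f * (Ξ f / (1 + αh f * Ξ f)))) Ξ Ω :=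
      fun f hf => div_one_sub_mul_div_one_add_mul (hΞ f hf)
    exact ⟨P, fun f => Ξ f / (1 + αh f * Ξ f), hPm, hP,
      hΞm.div (measurable_const.add (hαm.mul hΞm)),
      fun f hf => mul_div_one_add_mul_ne_one (hΞ f hf),
      (feasible_congr hΩ N₀ Pbar Qbar HSR P hinv).mpr hfeas,
      (rateFunctional_congr hΩ N₀ HSD HSR HRD P hinv).symm⟩

/-- Integral form of the reformulation from problem (9) to problem (13) (basis of
Remark 3.1): the supremum of the achievable rate over feasible source spectra `P`
and relay filters `Θ` (with `α̂(f)Θ(f) ≠ 1` on `Ω`), expressed through the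
effective gain `Ξ = Θ/(1 − α̂Θ)`, equals the supremum over feasible `(P, Ξ)` with
`α̂(f)Ξ(f) ≠ −1` on `Ω`; in particular it does not depend on the loop-back
channel `α̂`. -/
theorem fd_ff_rate_reformulation
    (Ω : Set ℝ) (hΩ : MeasurableSet Ω) (N₀ Pbar Qbar : ℝ)
    (hN₀ : 0 < N₀) (hPbar : 0 ≤ Pbar) (hQbar : 0 ≤ Qbar)
    (HSD HSR HRD αh : ℝ → ℂ)
    (hSDm : Measurable HSD) (hSRm : Measurable HSR) (hRDm : Measurable HRD)
    (hαm : Measurable αh) :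
    sSup {r : ℝ | ∃ P : ℝ → ℝ, ∃ Θ : ℝ → ℂ,
        Measurable P ∧ (∀ f, 0 ≤ P f) ∧ Measurable Θ ∧
        (∀ f ∈ Ω, αh f * Θ f ≠ 1) ∧
        feasible Ω N₀ Pbar Qbar HSR P (fun f => Θ f / (1 - αh f * Θ f)) ∧
        r = rateFunctional Ω N₀ HSD HSR HRD P (fun f => Θ f / (1 - αh f * Θ f))}
      = sSup {r : ℝ | ∃ P : ℝ → ℝ, ∃ Ξ : ℝ → ℂ,
        Measurable P ∧ (∀ f, 0 ≤ P f) ∧ Measurable Ξ ∧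
        (∀ f ∈ Ω, αh f * Ξ f ≠ -1) ∧
        feasible Ω N₀ Pbar Qbar HSR P Ξ ∧
        r = rateFunctional Ω N₀ HSD HSR HRD P Ξ} :=
  fd_ff_rate_reformulation_general Ω hΩ N₀ Pbar Qbar HSD HSR HRD αh hαm
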